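/- In the belt setup for the zonotope P, let F ∈ B(G) be a facet of P with G ⊆ F. Then F = {Σ_{i ∈ S(F)} x_i u_i : x_i ∈ [0,1]}, where S(F) is the set of indices i such that u_i is parallel to an edge of F. Moreover, for every facet F′ ∈ B(G) with F′ ≠ F and F′ not the facet of P opposite to F, one has F + R(F′) ⊆ P, where R(F′) = {Σ_{i ∈ S(F′), i ≠ 1} x_i u_i : x_i ∈ [0,1]}. -/

import Mathlib

open Pointwise

noncomputable section

/-- Euclidean n-space. -/
abbrev Euc (n : ℕ) : Type := EuclideanSpace ℝ (Fin n)

/-- A convex body: a compact convex set with nonempty interior. -/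
def IsConvexBody {n : ℕ} (K : Set (Euc n)) : Prop :=
  IsCompact K ∧ Convex ℝ K ∧ (interior K).Nonempty

/-- `K + X` (for the indexed family / discrete multiset `x : I → Euc n`) is a `k`-fold
translative tiling: every point lies in at least `k` translates of `K` and in at most `k`
translates of `interior K`, counted with multiplicity over the index set. -/
def IsKFoldTiling {n : ℕ} (K : Set (Euc n)) (k : ℕ) {I : Type} (x : I → Euc n) : Prop :=
  (∀ p : Euc n, ∃ s : Finset I, s.card = k ∧ ∀ i ∈ s, p ∈ x i +ᵥ K) ∧
  (∀ p : Euc n, ∀ s : Finset I, (∀ i ∈ s, p ∈ x i +ᵥ interior K) → s.card ≤ k)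

/-- `K` is a `k`-fold translative tile: some indexed family of translation vectors makes a
`k`-fold translative tiling. -/
def IsKFoldTile {n : ℕ} (K : Set (Euc n)) (k : ℕ) : Prop :=
  ∃ (I : Type) (x : I → Euc n), IsKFoldTiling K k x

/-- `K` is a parallelohedron: some full-rank lattice (the integer span of a basis) gives a
onefold (ordinary) translative tiling by `K`. -/
def IsParallelohedron {n : ℕ} (K : Set (Euc n)) : Prop :=
  ∃ b : Module.Basis (Fin n) ℝ (Euc n),
    IsKFoldTiling K 1 (fun c : Fin n → ℤ => ∑ i, (c i : ℝ) • b i)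

/-- `F` is a face of `P` of dimension `d`: an extreme convex subset whose affine span has
`d`-dimensional direction. -/
def IsFaceOfDim {n : ℕ} (P F : Set (Euc n)) (d : ℕ) : Prop :=
  IsExtreme ℝ P F ∧ Convex ℝ F ∧ Module.finrank ℝ (affineSpan ℝ F).direction = d

/-- A convex polytope with nonempty interior. -/
def IsConvexPolytope {n : ℕ} (P : Set (Euc n)) : Prop :=
  (∃ s : Finset (Euc n), P = convexHull ℝ (s : Set (Euc n))) ∧ (interior P).Nonempty

/-- The belt of `P` determined by the edge `G`: all facets of `P` containing a translate of `G`
as an edge. -/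
def belt {n : ℕ} (P G : Set (Euc n)) : Set (Set (Euc n)) :=
  {F | IsFaceOfDim P F 2 ∧ ∃ t : Euc n, IsFaceOfDim P (t +ᵥ G) 1 ∧ t +ᵥ G ⊆ F}

/-- Central symmetry of a set. -/
def IsCentrallySymmetric {n : ℕ} (K : Set (Euc n)) : Prop :=
  ∃ c : Euc n, ∀ p, p ∈ K ↔ (2 : ℝ) • c - p ∈ K

/-- The zonotope generated by the vectors `u i`. -/
def zonotope {n w : ℕ} (u : Fin w → Euc n) : Set (Euc n) :=
  {p | ∃ x : Fin w → ℝ, (∀ i, x i ∈ Set.Icc (0:ℝ) 1) ∧ p = ∑ i, x i • u i}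

/-- The set of indices of the generators parallel to some edge of a face F of P. -/
def genIndices {n w : ℕ} (u : Fin w → Euc n) (P F : Set (Euc n)) : Set (Fin w) :=
  {i | ∃ e : Set (Euc n), IsFaceOfDim P e 1 ∧ e ⊆ F ∧
        (affineSpan ℝ e).direction = Submodule.span ℝ {u i}}

/-- The subzonotope spanned by the generators with indices in S. -/
def subZonotope {n w : ℕ} (u : Fin w → Euc n) (S : Set (Fin w)) : Set (Euc n) :=
  {p | ∃ x : Fin w → ℝ, (∀ i, x i ∈ Set.Icc (0:ℝ) 1) ∧ (∀ i ∉ S, x i = 0) ∧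
        p = ∑ i, x i • u i}

section Aux
open Set





lemma zonotope_convex {n w : ℕ} (u : Fin w → Euc n) : Convex ℝ (zonotope u) := by
  rintro p ⟨x, hx, rfl⟩ q ⟨y, hy, rfl⟩ a b ha hb hab
  refine ⟨fun i => a * x i + b * y i, fun i => ?_, ?_⟩
  · obtain ⟨hx0, hx1⟩ := hx i
    obtain ⟨hy0, hy1⟩ := hy i
    constructor
    · positivity
    · calc a * x i + b * y i ≤ a * 1 + b * 1 := by
            gcongr
          _ = 1 := by linarith
  · rw [Finset.smul_sum, Finset.smul_sum, ← Finset.sum_add_distrib]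
    congr 1; ext i
    simp [smul_smul, add_smul]

lemma zonotope_mem {n w : ℕ} (u : Fin w → Euc n) (x : Fin w → ℝ)
    (hx : ∀ i, x i ∈ Set.Icc (0:ℝ) 1) : ∑ i, x i • u i ∈ zonotope u := ⟨x, hx, rfl⟩

lemma single_mem_zonotope {n w : ℕ} (u : Fin w → Euc n) (j : Fin w) : u j ∈ zonotope u := by
  have := zonotope_mem u (fun i => if i = j then 1 else 0) (by
    intro i; by_cases h : i = j <;> simp [h])
  simpa using this

/-- termwise value bound -/
lemma term_le_max {x fi : ℝ} (h0 : 0 ≤ x) (h1 : x ≤ 1) : x * fi ≤ max 0 fi := by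
  rcases le_or_gt fi 0 with h | h
  · have : x * fi ≤ 0 := mul_nonpos_of_nonneg_of_nonpos h0 h
    exact this.trans (le_max_left _ _)
  · have : x * fi ≤ fi := by nlinarith
    exact this.trans (le_max_right _ _)

lemma zonotope_fun_le {n w : ℕ} (u : Fin w → Euc n) (f : Euc n →ₗ[ℝ] ℝ)
    {p : Euc n} (hp : p ∈ zonotope u) : f p ≤ ∑ i, max 0 (f (u i)) := by
  obtain ⟨x, hx, rfl⟩ := hp
  rw [map_sum]
  refine Finset.sum_le_sum fun i _ => ?_
  rw [map_smul, smul_eq_mul]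
  exact term_le_max (hx i).1 (hx i).2

/-- the max value is attained -/
lemma zonotope_max_attained {n w : ℕ} (u : Fin w → Euc n) (f : Euc n →ₗ[ℝ] ℝ) :
    ∃ p ∈ zonotope u, f p = ∑ i, max 0 (f (u i)) := by
  refine ⟨∑ i, (if 0 < f (u i) then (1:ℝ) else 0) • u i,
    zonotope_mem u _ (fun i => by by_cases h : 0 < f (u i) <;> simp [h]), ?_⟩
  rw [map_sum]
  congr 1; ext i
  rw [map_smul, smul_eq_mul]
  rcases lt_trichotomy (f (u i)) 0 with h | h | h
  · simp [not_lt.mpr h.le, max_eq_left h.le]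
  · simp [h]
  · simp [h, max_eq_right h.le]

/-- if the max is attained at a point, the coefficients are forced -/
lemma zonotope_eq_max_forced {n w : ℕ} (u : Fin w → Euc n) (f : Euc n →ₗ[ℝ] ℝ)
    (x : Fin w → ℝ) (hx : ∀ i, x i ∈ Set.Icc (0:ℝ) 1)
    (heq : f (∑ i, x i • u i) = ∑ i, max 0 (f (u i))) :
    ∀ i, (0 < f (u i) → x i = 1) ∧ (f (u i) < 0 → x i = 0) := by
  have hterm : ∀ i ∈ Finset.univ, x i * f (u i) ≤ max 0 (f (u i)) :=
    fun i _ => term_le_max (hx i).1 (hx i).2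
  rw [map_sum] at heq
  simp_rw [map_smul, smul_eq_mul] at heq
  have hall := (Finset.sum_eq_sum_iff_of_le hterm).1 heq
  intro i
  have hi := hall i (Finset.mem_univ i)
  constructor
  · intro hpos
    rw [max_eq_right hpos.le] at hi
    have h2 : (x i - 1) * f (u i) = 0 := by ring_nf; linarith [hi]
    rcases mul_eq_zero.1 h2 with h | h
    · linarith
    · exact absurd h hpos.ne'
  · intro hneg
    rw [max_eq_left hneg.le] at hi
    rcases mul_eq_zero.1 hi with h | h
    · exact h
    · exact absurd h hneg.ne

section KL
variable {V : Type*} [NormedAddCommGroup V] [NormedSpace ℝ V] [FiniteDimensional ℝ V]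

/-- A face of a set equals the intersection of the set with its affine span. -/
lemma mem_face_of_mem_affineSpan {C F : Set V} (hFC : IsExtreme ℝ C F)
    (hFconv : Convex ℝ F) (hFne : F.Nonempty) {m : V} (hmC : m ∈ C)
    (hm : m ∈ affineSpan ℝ F) : m ∈ F := by
  obtain ⟨z, hz⟩ := hFne.intrinsicInterior hFconv
  rw [mem_intrinsicInterior] at hz
  obtain ⟨y, hy, rfl⟩ := hz
  -- points q n = (1 + 1/(n+1)) • (z - m) + m  tend to z
  set z : V := (y : V) with hzdef
  have hzA : z ∈ affineSpan ℝ F := y.2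
  set t : ℕ → ℝ := fun n => 1 + 1/(n+1) with ht
  have htpos : ∀ n, 1 < t n := by
    intro n
    have : (0:ℝ) < 1/(n+1) := by positivity
    simp [ht]; linarith
  set q : ℕ → V := fun n => t n • (z - m) + m with hq
  have hqA : ∀ n, q n ∈ affineSpan ℝ F := by
    intro n
    have := AffineSubspace.smul_vsub_vadd_mem (affineSpan ℝ F) (t n) hzA hm hm
    simpa [hq] using this
  have hqt : Filter.Tendsto q Filter.atTop (nhds z) := by
    have h1 : Filter.Tendsto t Filter.atTop (nhds 1) := by
      have : Filter.Tendsto (fun n : ℕ => 1/((n:ℝ)+1)) Filter.atTop (nhds 0) := by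
        exact tendsto_one_div_add_atTop_nhds_zero_nat
      have := this.const_add (1:ℝ)
      simpa [ht] using this
    have : Filter.Tendsto (fun n => t n • (z - m) + m) Filter.atTop
        (nhds ((1:ℝ) • (z - m) + m)) := by
      exact ((h1.smul_const (z - m)).add_const m)
    simpa [hq] using this
  -- lift to the subtype
  set q' : ℕ → affineSpan ℝ F := fun n => ⟨q n, hqA n⟩ with hq'
  have hqt' : Filter.Tendsto q' Filter.atTop (nhds y) := by
    rw [tendsto_subtype_rng]
    exact hqt
  have hev : ∀ᶠ n in Filter.atTop, q' n ∈ interior (((↑) : affineSpan ℝ F → V) ⁻¹' F) :=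
    hqt'.eventually_mem (isOpen_interior.mem_nhds hy)
  obtain ⟨n, hn⟩ := hev.exists
  have hqF : q n ∈ F := by have := interior_subset hn; exact this
  -- z is in the open segment between q n and m
  have hmem : z ∈ openSegment ℝ (q n) m := by
    have h0 : (0:ℝ) < t n := lt_trans one_pos (htpos n)
    refine ⟨1 / t n, 1 - 1 / t n, by positivity, ?_, by ring, ?_⟩
    · have : 1 / t n < 1 := by
        rw [div_lt_one h0]; exact htpos n
      linarith
    · rw [hq]
      have htne : t n ≠ 0 := ne_of_gt h0
      rw [smul_add, smul_smul, one_div_mul_cancel htne, one_smul]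
      module
  have hzF : z ∈ F := by have := interior_subset hy; exact this
  exact hFC.right_mem_of_mem_openSegment (hFC.1 hqF) hmC hzF hmem

end KL
section ML2

open Module

lemma ker_inner_eq {D : Submodule ℝ (Euc 3)} (hdim : finrank ℝ D = 2)
    {w₀ : Euc 3} (hw₀D : w₀ ∈ Dᗮ) (hw₀ : w₀ ≠ 0) :
    LinearMap.ker ((innerSL ℝ w₀).toLinearMap) = D := by
  set f₀ := (innerSL ℝ w₀).toLinearMap with hf₀
  have happ : ∀ v, f₀ v = (inner ℝ w₀ v : ℝ) := fun v => rfl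
  have hDle : D ≤ LinearMap.ker f₀ := by
    intro v hv
    rw [LinearMap.mem_ker, happ, real_inner_comm]
    exact (Submodule.mem_orthogonal D w₀).1 hw₀D v hv
  have hf₀ne : f₀ ≠ 0 := by
    intro h
    have h2 : (inner ℝ w₀ w₀ : ℝ) = 0 := by
      rw [← happ, h]; rfl
    exact hw₀ (inner_self_eq_zero.1 h2)
  have hrange : LinearMap.range f₀ = ⊤ := by
    rcases eq_bot_or_eq_top (LinearMap.range f₀) with h | h
    · exact absurd (LinearMap.range_eq_bot.1 h) hf₀ne
    · exact h
  have hker : finrank ℝ (LinearMap.ker f₀) = 2 := by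
    have h := LinearMap.finrank_range_add_finrank_ker f₀
    rw [hrange, finrank_top, Module.finrank_self] at h
    rw [finrank_euclideanSpace_fin] at h
    omega
  exact (Submodule.eq_of_le_of_finrank_le hDle (by rw [hker, hdim])).symm

lemma plane_iff {F₀ : Set (Euc 3)} {t₀ : Euc 3} (ht₀ : t₀ ∈ F₀)
    (f : Euc 3 →ₗ[ℝ] ℝ) (hkf : LinearMap.ker f = (affineSpan ℝ F₀).direction) :
    ∀ x, x ∈ affineSpan ℝ F₀ ↔ f x = f t₀ := by
  intro x
  have ht₀' : t₀ ∈ affineSpan ℝ F₀ := subset_affineSpan ℝ F₀ ht₀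
  rw [← AffineSubspace.vsub_right_mem_direction_iff_mem ht₀' x, ← hkf,
    LinearMap.mem_ker]
  have : x -ᵥ t₀ = x - t₀ := rfl
  rw [this, map_sub, sub_eq_zero]

lemma face2_description {w : ℕ} (u : Fin w → Euc 3) {F₀ : Set (Euc 3)}
    (hF₀ : IsFaceOfDim (zonotope u) F₀ 2) {t₀ : Euc 3} (ht₀ : t₀ ∈ F₀) :
    ∃ f : Euc 3 →ₗ[ℝ] ℝ,
      LinearMap.ker f = (affineSpan ℝ F₀).direction ∧
      (∀ p ∈ zonotope u, f p ≤ f t₀) ∧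
      F₀ = {p | ∃ x : Fin w → ℝ, (∀ i, x i ∈ Set.Icc (0:ℝ) 1) ∧
            (∀ i, 0 < f (u i) → x i = 1) ∧ (∀ i, f (u i) < 0 → x i = 0) ∧
            p = ∑ i, x i • u i} := by
  obtain ⟨hext, hconv, hdim⟩ := hF₀
  have hDne : (affineSpan ℝ F₀).direction ≠ ⊤ := by
    intro h
    rw [h, finrank_top, finrank_euclideanSpace_fin] at hdim
    omega
  have hbot : ((affineSpan ℝ F₀).direction)ᗮ ≠ ⊥ := by
    rw [Ne, Submodule.orthogonal_eq_bot_iff]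
    exact hDne
  obtain ⟨w₀, hw₀D, hw₀⟩ := Submodule.exists_mem_ne_zero_of_ne_bot hbot
  set f₀ := (innerSL ℝ w₀).toLinearMap with hf₀def
  have hker₀ : LinearMap.ker f₀ = (affineSpan ℝ F₀).direction :=
    ker_inner_eq hdim hw₀D hw₀
  have hplane₀ := plane_iff ht₀ f₀ hker₀
  -- the zonotope is on one side of the plane of F₀
  have hside : (∀ p ∈ zonotope u, f₀ p ≤ f₀ t₀) ∨ (∀ p ∈ zonotope u, f₀ t₀ ≤ f₀ p) := by
    by_contra h
    push_neg at h
    obtain ⟨⟨p, hpP, hp⟩, ⟨q, hqP, hq⟩⟩ := h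
    set a := (f₀ t₀ - f₀ q)/(f₀ p - f₀ q) with ha_def
    have hd : 0 < f₀ p - f₀ q := by linarith
    have ha : 0 < a := div_pos (by linarith) hd
    have ha1 : a < 1 := (div_lt_one hd).2 (by linarith)
    have hfm : f₀ (a • p + (1-a) • q) = f₀ t₀ := by
      rw [map_add, map_smul, map_smul, smul_eq_mul, smul_eq_mul]
      have : a * (f₀ p - f₀ q) = f₀ t₀ - f₀ q := by
        rw [ha_def]; field_simp
      nlinarith [this]
    have hmP : (a • p + (1-a) • q) ∈ zonotope u :=
      zonotope_convex u hpP hqP ha.le (by linarith) (by ring)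
    have hmF : (a • p + (1-a) • q) ∈ F₀ :=
      mem_face_of_mem_affineSpan hext hconv ⟨t₀, ht₀⟩ hmP ((hplane₀ _).2 hfm)
    have hseg : (a • p + (1-a) • q) ∈ openSegment ℝ p q :=
      ⟨a, 1-a, ha, by linarith, by ring, rfl⟩
    have hpq := hext.2 hpP hqP hmF hseg
    have : f₀ p = f₀ t₀ := (hplane₀ p).1 (subset_affineSpan ℝ F₀ hpq)
    linarith
  -- the abstract finish
  have H : ∀ f : Euc 3 →ₗ[ℝ] ℝ, LinearMap.ker f = (affineSpan ℝ F₀).direction →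
      (∀ p ∈ zonotope u, f p ≤ f t₀) →
      F₀ = {p | ∃ x : Fin w → ℝ, (∀ i, x i ∈ Set.Icc (0:ℝ) 1) ∧
            (∀ i, 0 < f (u i) → x i = 1) ∧ (∀ i, f (u i) < 0 → x i = 0) ∧
            p = ∑ i, x i • u i} := by
    intro f hkf hle
    have hplane := plane_iff ht₀ f hkf
    have hM : f t₀ = ∑ i, max 0 (f (u i)) := by
      refine le_antisymm (zonotope_fun_le u f (hext.1 ht₀)) ?_
      obtain ⟨p, hp, hfp⟩ := zonotope_max_attained u f
      rw [← hfp]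
      exact hle p hp
    ext p
    constructor
    · intro hp
      obtain ⟨x, hx, rfl⟩ := hext.1 hp
      have heq : f (∑ i, x i • u i) = ∑ i, max 0 (f (u i)) := by
        rw [← hM]
        exact (hplane _).1 (subset_affineSpan ℝ F₀ hp)
      have hforced := zonotope_eq_max_forced u f x hx heq
      exact ⟨x, hx, fun i => (hforced i).1, fun i => (hforced i).2, rfl⟩
    · rintro ⟨x, hx, h1, h0, rfl⟩
      have hpP : (∑ i, x i • u i) ∈ zonotope u := zonotope_mem u x hx
      have heq : f (∑ i, x i • u i) = f t₀ := by
        rw [hM, map_sum]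
        congr 1; ext i
        rw [map_smul, smul_eq_mul]
        rcases lt_trichotomy (f (u i)) 0 with h | h | h
        · rw [h0 i h, max_eq_left h.le]; ring
        · simp [h]
        · rw [h1 i h, max_eq_right h.le]; ring
      exact mem_face_of_mem_affineSpan hext hconv ⟨t₀, ht₀⟩ hpP ((hplane _).2 heq)
  rcases hside with h | h
  · exact ⟨f₀, hker₀, h, H f₀ hker₀ h⟩
  · refine ⟨-f₀, ?_, ?_, ?_⟩
    · rw [← hker₀]
      ext v
      simp [LinearMap.mem_ker, neg_eq_zero]
    · intro p hp
      simpa using neg_le_neg (h p hp)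
    · refine H (-f₀) ?_ ?_
      · rw [← hker₀]; ext v; simp [LinearMap.mem_ker, neg_eq_zero]
      · intro p hp; simpa using neg_le_neg (h p hp)

end ML2
section Edge

open Module

lemma genIndices_subset {n w : ℕ} (u : Fin w → Euc n) (P F : Set (Euc n))
    (f : Euc n →ₗ[ℝ] ℝ) (hkf : LinearMap.ker f = (affineSpan ℝ F).direction) :
    ∀ i ∈ genIndices u P F, f (u i) = 0 := by
  rintro i ⟨e, he, heF, hedir⟩
  have h1 : u i ∈ Submodule.span ℝ {u i} := Submodule.mem_span_singleton_self _
  rw [← hedir] at h1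
  have h2 : (affineSpan ℝ e).direction ≤ (affineSpan ℝ F).direction :=
    AffineSubspace.direction_le (affineSpan_mono ℝ heF)
  have h3 : u i ∈ LinearMap.ker f := by rw [hkf]; exact h2 h1
  exact h3

lemma isExtreme_argmax {n : ℕ} {C : Set (Euc n)} {f : Euc n →ₗ[ℝ] ℝ} {M : ℝ}
    (hle : ∀ p ∈ C, f p ≤ M) : IsExtreme ℝ C {p ∈ C | f p = M} := by
  constructor
  · exact fun p hp => hp.1
  · rintro x hx y hy z ⟨hzC, hzM⟩ ⟨a, b, ha, hb, hab, rfl⟩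
    have hfx := hle x hx
    have hfy := hle y hy
    have hsum : a * f x + b * f y = M := by
      simpa [map_add, map_smul, smul_eq_mul] using hzM
    have h2 : a * M + b * M = M := by rw [← add_mul, hab, one_mul]
    have hfxM : f x = M := by
      by_contra hne
      have h1 : f x < M := lt_of_le_of_ne hfx hne
      have h3 := mul_lt_mul_of_pos_left h1 ha
      have h4 := mul_le_mul_of_nonneg_left hfy hb.le
      linarith
    have hfyM : f y = M := by
      by_contra hne
      have h1 : f y < M := lt_of_le_of_ne hfy hne
      have h3 := mul_lt_mul_of_pos_left h1 hb
      have h4 := mul_le_mul_of_nonneg_left hfx ha.le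
      linarith
    exact ⟨hx, hfxM⟩

lemma mem_subZonotope_single {n w : ℕ} (u : Fin w → Euc n) (S : Set (Fin w))
    {j : Fin w} (hj : j ∈ S) (s : ℝ) (hs : s ∈ Set.Icc (0:ℝ) 1) :
    s • u j ∈ subZonotope u S := by
  classical
  refine ⟨fun i => if i = j then s else 0, fun i => ?_, fun i hi => ?_, ?_⟩
  · by_cases h : i = j <;> simp [h, hs]
  · have : i ≠ j := fun h => hi (h ▸ hj)
    simp [this]
  · simp [Finset.sum_ite_eq']

lemma zero_mem_subZonotope {n w : ℕ} (u : Fin w → Euc n) (S : Set (Fin w)) :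
    (0 : Euc n) ∈ subZonotope u S := by
  refine ⟨fun _ => 0, fun i => by simp, fun i _ => rfl, by simp⟩

lemma subZonotope_subset_span {n w : ℕ} (u : Fin w → Euc n) (S : Set (Fin w)) :
    subZonotope u S ⊆ (Submodule.span ℝ (u '' S) : Submodule ℝ (Euc n)) := by
  rintro p ⟨x, hx, hx0, rfl⟩
  refine Submodule.sum_mem _ fun j _ => ?_
  by_cases hj : j ∈ S
  · exact Submodule.smul_mem _ _ (Submodule.subset_span ⟨j, hj, rfl⟩)
  · rw [hx0 j hj, zero_smul]; exact Submodule.zero_mem _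

lemma edge_exists {w : ℕ} (u : Fin w → Euc 3)
    (hu : ∀ i j : Fin w, i ≠ j → LinearIndependent ℝ ![u i, u j])
    (F : Set (Euc 3)) (hface : IsFaceOfDim (zonotope u) F 2)
    (f : Euc 3 →ₗ[ℝ] ℝ)
    (hFZ : F = subZonotope u {i | f (u i) = 0}) :
    ∀ i, f (u i) = 0 → i ∈ genIndices u (zonotope u) F := by
  classical
  intro i hfi
  obtain ⟨hext, hconv, hdim⟩ := hface
  set Z : Set (Fin w) := {i | f (u i) = 0} with hZ
  set D := (affineSpan ℝ F).direction with hD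
  have hiZ : i ∈ Z := hfi
  have h0F : (0 : Euc 3) ∈ F := by rw [hFZ]; exact zero_mem_subZonotope u Z
  have hmemD : ∀ j ∈ Z, u j ∈ D := by
    intro j hj
    have hujF : u j ∈ F := by
      rw [hFZ]
      simpa using mem_subZonotope_single u Z hj 1 (by norm_num)
    have := AffineSubspace.vsub_mem_direction
      (subset_affineSpan ℝ F hujF) (subset_affineSpan ℝ F h0F)
    simpa using this
  have hDle : D ≤ Submodule.span ℝ (u '' Z) := by
    have hFsub : F ⊆ (Submodule.span ℝ (u '' Z) : Submodule ℝ (Euc 3)) := by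
      rw [hFZ]; exact subZonotope_subset_span u Z
    have h1 : affineSpan ℝ F ≤ (Submodule.span ℝ (u '' Z)).toAffineSubspace := by
      rw [affineSpan_le]; exact hFsub
    have h2 := AffineSubspace.direction_le h1
    simpa using h2
  -- find j ∈ Z with u j ∉ span {u i}
  obtain ⟨j, hjZ, hj⟩ : ∃ j ∈ Z, u j ∉ Submodule.span ℝ {u i} := by
    by_contra h
    push_neg at h
    have h1 : Submodule.span ℝ (u '' Z) ≤ Submodule.span ℝ {u i} := by
      rw [Submodule.span_le]
      rintro _ ⟨j, hj, rfl⟩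
      exact h j hj
    have h2 : D ≤ Submodule.span ℝ {u i} := hDle.trans h1
    have h3 : finrank ℝ D ≤ finrank ℝ (Submodule.span ℝ ({u i} : Set (Euc 3))) :=
      Submodule.finrank_mono h2
    have h4 : finrank ℝ (Submodule.span ℝ ({u i} : Set (Euc 3))) ≤ 1 := by
      rcases eq_or_ne (u i) 0 with h | h
      · rw [h, Submodule.span_zero_singleton]
        simp
      · rw [finrank_span_singleton h]
    rw [hdim] at h3
    omega
  have hij : i ≠ j := fun h => hj (h ▸ Submodule.mem_span_singleton_self (u i))
  have hui : u i ≠ 0 := by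
    have hind := hu j i (Ne.symm hij)
    have := (linearIndependent_fin2.1 hind).1
    simpa using this
  set wi : Euc 3 := u j - ((inner ℝ (u i) (u j) : ℝ)/((inner ℝ (u i) (u i) : ℝ))) • u i with hwi
  set g := (innerSL ℝ wi).toLinearMap with hg
  have happ : ∀ v, g v = (inner ℝ wi v : ℝ) := fun v => rfl
  have hinner_ne : (inner ℝ (u i) (u i) : ℝ) ≠ 0 := inner_self_ne_zero.2 hui
  have hgui : g (u i) = 0 := by
    rw [happ, hwi, inner_sub_left, real_inner_smul_left,
      div_mul_cancel₀ _ hinner_ne, real_inner_comm (u j) (u i), sub_self]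
  have hwine : wi ≠ 0 := by
    intro h
    apply hj
    rw [Submodule.mem_span_singleton]
    exact ⟨_, (sub_eq_zero.1 h).symm⟩
  have hgwi : g wi ≠ 0 := by
    rw [happ]
    exact inner_self_ne_zero.2 hwine
  have hwiD : wi ∈ D := by
    rw [hwi]
    exact Submodule.sub_mem _ (hmemD j hjZ) (Submodule.smul_mem _ _ (hmemD i hiZ))
  -- all other generators in Z are not in ker g
  have hgker : ∀ j' ∈ Z, j' ≠ i → g (u j') ≠ 0 := by
    intro j' hj'Z hj'i hgj'
    set W := D ⊓ LinearMap.ker g with hW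
    have hWlt : W < D := by
      refine lt_of_le_of_ne inf_le_left ?_
      intro h
      have : wi ∈ W := h ▸ hwiD
      exact hgwi (this.2)
    have hWrank : finrank ℝ W < 2 := by
      have := Submodule.finrank_lt_finrank_of_lt hWlt
      omega
    have hspan_le : Submodule.span ℝ {u i} ≤ W := by
      rw [Submodule.span_le, Set.singleton_subset_iff]
      exact ⟨hmemD i hiZ, hgui⟩
    have hspan_rank : finrank ℝ (Submodule.span ℝ ({u i} : Set (Euc 3))) = 1 :=
      finrank_span_singleton hui
    have hWeq : Submodule.span ℝ {u i} = W :=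
      Submodule.eq_of_le_of_finrank_le hspan_le (by omega)
    have : u j' ∈ Submodule.span ℝ ({u i} : Set (Euc 3)) := by
      rw [hWeq]
      exact ⟨hmemD j' hj'Z, hgj'⟩
    obtain ⟨c, hc⟩ := Submodule.mem_span_singleton.1 this
    have hind := hu j' i hj'i
    exact (linearIndependent_fin2.1 hind).2 c (by simpa using hc)
  -- the edge: argmax of g on F
  set T : Finset (Fin w) := Finset.univ.filter (fun j' => j' ∈ Z ∧ 0 < g (u j')) with hT
  set ci : Euc 3 := ∑ j' ∈ T, u j' with hci
  set M : ℝ := ∑ j' ∈ T, g (u j') with hM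
  have hiT : i ∉ T := by
    simp only [hT, Finset.mem_filter]
    rintro ⟨-, -, h⟩
    rw [hgui] at h
    exact lt_irrefl 0 h
  have hFle : ∀ p ∈ F, g p ≤ M := by
    intro p hp
    rw [hFZ] at hp
    obtain ⟨x, hx, hx0, rfl⟩ := hp
    rw [map_sum, hM]
    simp_rw [map_smul, smul_eq_mul]
    have hterm0 : ∀ j' ∈ Finset.univ, x j' * g (u j') ≤ (if j' ∈ T then g (u j') else 0) := by
      intro j' _
      by_cases hj' : j' ∈ T
      · simp only [hj', if_true]
        have hpos : 0 < g (u j') := ((Finset.mem_filter.1 hj').2).2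
        nlinarith [(hx j').1, (hx j').2]
      · simp only [hj', if_false]
        by_cases hj'Z : j' ∈ Z
        · have hnpos : ¬ 0 < g (u j') := by
            intro h
            exact hj' (Finset.mem_filter.2 ⟨Finset.mem_univ _, hj'Z, h⟩)
          push_neg at hnpos
          exact mul_nonpos_of_nonneg_of_nonpos (hx j').1 hnpos
        · rw [hx0 j' hj'Z, zero_mul]
    calc ∑ j', x j' * g (u j') ≤ ∑ j', (if j' ∈ T then g (u j') else 0) :=
          Finset.sum_le_sum hterm0
      _ = ∑ j' ∈ T, g (u j') := by rw [Finset.sum_ite_mem, Finset.univ_inter]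
  set e : Set (Euc 3) := {p ∈ F | g p = M} with he
  have heF : e ⊆ F := fun p hp => hp.1
  have heseg : e = segment ℝ ci (ci + u i) := by
    ext p
    constructor
    · rintro ⟨hpF, hpM⟩
      rw [hFZ] at hpF
      obtain ⟨x, hx, hx0, rfl⟩ := hpF
      -- coefficients are forced
      have hterm : ∀ j' ∈ Finset.univ, x j' * g (u j') ≤ (if j' ∈ T then g (u j') else 0) := by
        intro j' _
        by_cases hj' : j' ∈ T
        · simp only [hj', if_true]
          have hpos : 0 < g (u j') := ((Finset.mem_filter.1 hj').2).2
          nlinarith [(hx j').1, (hx j').2]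
        · simp only [hj', if_false]
          by_cases hj'Z : j' ∈ Z
          · have hnpos : ¬ 0 < g (u j') := by
              intro h
              exact hj' (Finset.mem_filter.2 ⟨Finset.mem_univ _, hj'Z, h⟩)
            push_neg at hnpos
            exact mul_nonpos_of_nonneg_of_nonpos (hx j').1 hnpos
          · rw [hx0 j' hj'Z, zero_mul]
      have hsum : ∑ j', x j' * g (u j') = ∑ j', (if j' ∈ T then g (u j') else 0) := by
        rw [Finset.sum_ite_mem, Finset.univ_inter, ← hM]
        rw [map_sum] at hpM
        simp_rw [map_smul, smul_eq_mul] at hpM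
        exact hpM
      have hall := (Finset.sum_eq_sum_iff_of_le hterm).1 hsum
      -- now rewrite the sum
      have hxi : x i ∈ Set.Icc (0:ℝ) 1 := hx i
      refine (segment_eq_image' ℝ ci (ci + u i)).symm ▸ ⟨x i, hxi, ?_⟩
      have hterm_eq : ∀ j' ∈ Finset.univ,
          x j' • u j' = (if j' ∈ T then u j' else 0) + (if j' = i then x i • u i else 0) := by
        intro j' _
        by_cases hj'T : j' ∈ T
        · have hj'i : j' ≠ i := fun h => hiT (h ▸ hj'T)
          have hpos : 0 < g (u j') := ((Finset.mem_filter.1 hj'T).2).2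
          have hx1 : x j' = 1 := by
            have h5 := hall j' (Finset.mem_univ j')
            simp only [hj'T, if_true] at h5
            have h6 : (x j' - 1) * g (u j') = 0 := by ring_nf; linarith [h5]
            rcases mul_eq_zero.1 h6 with h | h
            · linarith
            · exact absurd h hpos.ne'
          simp [hj'T, hj'i, hx1]
        · by_cases hj'i : j' = i
          · subst hj'i
            simp [hj'T]
          · have hx0' : x j' = 0 := by
              by_cases hj'Z : j' ∈ Z
              · have hne := hgker j' hj'Z hj'i
                have hnpos : ¬ 0 < g (u j') := by
                  intro h
                  exact hj'T (Finset.mem_filter.2 ⟨Finset.mem_univ _, hj'Z, h⟩)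
                push_neg at hnpos
                have hneg : g (u j') < 0 := lt_of_le_of_ne hnpos hne
                have := hall j' (Finset.mem_univ j')
                simp only [hj'T, if_false] at this
                rcases mul_eq_zero.1 this with h | h
                · exact h
                · exact absurd h hne
              · exact hx0 j' hj'Z
            simp [hj'T, hj'i, hx0']
      rw [Finset.sum_congr rfl hterm_eq, Finset.sum_add_distrib]
      rw [Finset.sum_ite_mem, Finset.univ_inter, Finset.sum_ite_eq']
      simp only [Finset.mem_univ, if_true]
      rw [← hci, add_sub_cancel_left]
    · rintro hp
      rw [segment_eq_image' ℝ ci (ci + u i)] at hp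
      obtain ⟨s, hs, rfl⟩ := hp
      have hrep : ci + s • (ci + u i - ci) = ∑ j', (if j' ∈ T then (1:ℝ) else if j' = i then s else 0) • u j' := by
        have hterm_eq : ∀ j' ∈ Finset.univ,
            (if j' ∈ T then (1:ℝ) else if j' = i then s else 0) • u j'
              = (if j' ∈ T then u j' else 0) + (if j' = i then s • u i else 0) := by
          intro j' _
          by_cases hj'T : j' ∈ T
          · have hj'i : j' ≠ i := fun h => hiT (h ▸ hj'T)
            simp [hj'T, hj'i]
          · by_cases hj'i : j' = i
            · subst hj'i; simp [hj'T]
            · simp [hj'T, hj'i]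
        rw [Finset.sum_congr rfl hterm_eq, Finset.sum_add_distrib]
        rw [Finset.sum_ite_mem, Finset.univ_inter, Finset.sum_ite_eq']
        simp only [Finset.mem_univ, if_true, ← hci]
        rw [add_sub_cancel_left]
      constructor
      · rw [hFZ]
        refine ⟨_, ?_, ?_, hrep⟩
        · intro j'
          by_cases hj'T : j' ∈ T
          · simp [hj'T]
          · by_cases hj'i : j' = i
            · simp [hj'i, hiT, hs.1, hs.2]
            · simp [hj'T, hj'i]
        · intro j' hj'Z
          have hj'T : j' ∉ T := by
            intro h
            exact hj'Z ((Finset.mem_filter.1 h).2).1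
          have hj'i : j' ≠ i := fun h => hj'Z (h ▸ hiZ)
          simp [hj'T, hj'i]
      · show g (ci + s • (ci + u i - ci)) = M
        rw [hrep, map_sum]
        simp_rw [map_smul, smul_eq_mul]
        have hterm_eq2 : ∀ j' ∈ Finset.univ,
            (if j' ∈ T then (1:ℝ) else if j' = i then s else 0) * g (u j')
              = (if j' ∈ T then g (u j') else 0) := by
          intro j' _
          by_cases hj'T : j' ∈ T
          · simp [hj'T]
          · by_cases hj'i : j' = i
            · subst hj'i; simp [hj'T, hgui]
            · simp [hj'T, hj'i]
        rw [Finset.sum_congr rfl hterm_eq2, Finset.sum_ite_mem, Finset.univ_inter, hM]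
  -- e is a face of dimension 1
  have hee : IsExtreme ℝ (zonotope u) e := hext.trans (isExtreme_argmax hFle)
  have hconve : Convex ℝ e := by rw [heseg]; exact convex_segment _ _
  have hdire : (affineSpan ℝ e).direction = Submodule.span ℝ {u i} := by
    rw [heseg, ← convexHull_pair, affineSpan_convexHull, direction_affineSpan,
      vectorSpan_pair]
    have : ci -ᵥ (ci + u i) = -(u i) := by
      simp [vsub_eq_sub]
    rw [this, show ({-(u i)} : Set (Euc 3)) = -{u i} by simp, Submodule.span_neg]
  refine ⟨e, ⟨hee, hconve, ?_⟩, heF, hdire⟩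
  rw [hdire]
  exact finrank_span_singleton hui
end Edge

section Main

open Module

lemma desc_eq_subZonotope {w : ℕ} (u : Fin w → Euc 3) (f : Euc 3 →ₗ[ℝ] ℝ)
    (hneg : ∀ i, f (u i) ≤ 0) :
    {p | ∃ x : Fin w → ℝ, (∀ i, x i ∈ Set.Icc (0:ℝ) 1) ∧
      (∀ i, 0 < f (u i) → x i = 1) ∧ (∀ i, f (u i) < 0 → x i = 0) ∧
      p = ∑ i, x i • u i} = subZonotope u {i | f (u i) = 0} := by
  ext p
  constructor
  · rintro ⟨x, hx, h1, h0, rfl⟩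
    exact ⟨x, hx, fun i hi => h0 i (lt_of_le_of_ne (hneg i) (by simpa using hi)), rfl⟩
  · rintro ⟨x, hx, h0, rfl⟩
    exact ⟨x, hx, fun i hi => absurd hi (not_lt.2 (hneg i)),
      fun i hi => h0 i (by simp [hi.ne]), rfl⟩

lemma prop_of_ker_eq {f g : Euc 3 →ₗ[ℝ] ℝ}
    (hfg : LinearMap.ker f = LinearMap.ker g) (hf : f ≠ 0) :
    ∃ lam : ℝ, ∀ x, g x = lam * f x := by
  obtain ⟨v, hv⟩ := DFunLike.ne_iff.1 hf
  have hv : f v ≠ 0 := hv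
  refine ⟨g v / f v, fun x => ?_⟩
  have hker : x - (f x / f v) • v ∈ LinearMap.ker f := by
    rw [LinearMap.mem_ker, map_sub, map_smul, smul_eq_mul]
    field_simp
    ring
  rw [hfg, LinearMap.mem_ker, map_sub, map_smul, smul_eq_mul] at hker
  have h1 : g x = (f x / f v) * g v := by linarith [hker]
  rw [h1]
  field_simp


end Main
end Aux

section MainThm
open Set Module

/-- Lemma 5 (with the facet description of equation (4)): in the belt setup, the facet F of P
containing G is the subzonotope on its own generators, and for every other, non-opposite,
facet F' in the belt, F + R(F') is contained in P. -/
theorem facet_plus_R_subset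
    {w : ℕ} (u : Fin w → Euc 3)
    (hu : ∀ i j : Fin w, i ≠ j → LinearIndependent ℝ ![u i, u j])
    (P : Set (Euc 3)) (hP : P = zonotope u)
    (i₁ : Fin w) (G : Set (Euc 3)) (hG : G = segment ℝ 0 (u i₁))
    (h0 : (0 : Euc 3) ∈ Set.extremePoints ℝ P) (hGe : IsFaceOfDim P G 1)
    (F : Set (Euc 3)) (hF : F ∈ belt P G) (hGF : G ⊆ F) :
    F = subZonotope u (genIndices u P F) ∧
    ∀ F' ∈ belt P G, F' ≠ F → F' ≠ (fun p => (∑ i, u i) - p) '' F →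
      F + subZonotope u (genIndices u P F' \ {i₁}) ⊆ P := by
  classical
  subst hP
  subst hG
  have h0G : (0:Euc 3) ∈ segment ℝ 0 (u i₁) := left_mem_segment ℝ 0 (u i₁)
  have h0F : (0:Euc 3) ∈ F := hGF h0G
  have hu1F : u i₁ ∈ F := hGF (right_mem_segment ℝ 0 (u i₁))
  obtain ⟨hFface, -⟩ := hF
  obtain ⟨f, hkf, hle, hFdesc⟩ := face2_description u hFface h0F
  have hle0 : ∀ p ∈ zonotope u, f p ≤ 0 := by
    intro p hp
    have := hle p hp
    simpa using this
  have hneg : ∀ i, f (u i) ≤ 0 := fun i => hle0 _ (single_mem_zonotope u i)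
  have hFZ : F = subZonotope u {i | f (u i) = 0} := by
    rw [hFdesc, desc_eq_subZonotope u f hneg]
  have hdimF : finrank ℝ (LinearMap.ker f) = 2 := by rw [hkf]; exact hFface.2.2
  have hfu1 : f (u i₁) = 0 := by
    have h1 := AffineSubspace.vsub_mem_direction
      (subset_affineSpan ℝ F hu1F) (subset_affineSpan ℝ F h0F)
    rw [← hkf] at h1
    simpa using h1
  have hgen_sub := genIndices_subset u (zonotope u) F f hkf
  have hgen_sup := edge_exists u hu F hFface f hFZ
  have hgen_eq : genIndices u (zonotope u) F = {i | f (u i) = 0} :=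
    Set.Subset.antisymm hgen_sub hgen_sup
  refine ⟨by rw [hgen_eq]; exact hFZ, ?_⟩
  rintro F' ⟨hF'face, t, hGt, hGtF'⟩ hneF hnopp
  have htF' : t ∈ F' := hGtF' ⟨0, h0G, by simp⟩
  obtain ⟨g, hkg, hleg, hF'desc⟩ := face2_description u hF'face htF'
  have hdimF' : finrank ℝ (LinearMap.ker g) = 2 := by rw [hkg]; exact hF'face.2.2
  have hgu1 : g (u i₁) = 0 := by
    have h1 : t + u i₁ ∈ F' := hGtF' ⟨u i₁, right_mem_segment ℝ 0 (u i₁), rfl⟩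
    have h2 := AffineSubspace.vsub_mem_direction
      (subset_affineSpan ℝ F' h1) (subset_affineSpan ℝ F' htF')
    rw [← hkg] at h2
    simpa using h2
  have hcrux : ∀ j, f (u j) = 0 → g (u j) = 0 → j = i₁ := by
    intro j hfj hgj
    by_contra hji
    have hind : LinearIndependent ℝ ![u i₁, u j] := hu i₁ j (fun h => hji h.symm)
    have hrange : Set.range ![u i₁, u j] = {u i₁, u j} := by
      simp [Matrix.range_cons, Matrix.range_empty, Set.pair_comm]
    have hspan2 : finrank ℝ (Submodule.span ℝ ({u i₁, u j} : Set (Euc 3))) = 2 := by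
      have h1 := finrank_span_eq_card hind
      rw [hrange] at h1
      simpa using h1
    have hsubf : Submodule.span ℝ ({u i₁, u j} : Set (Euc 3)) ≤ LinearMap.ker f := by
      rw [Submodule.span_le]
      rintro v hv
      rcases hv with rfl | rfl
      · exact hfu1
      · exact hfj
    have hsubg : Submodule.span ℝ ({u i₁, u j} : Set (Euc 3)) ≤ LinearMap.ker g := by
      rw [Submodule.span_le]
      rintro v hv
      rcases hv with rfl | rfl
      · exact hgu1
      · exact hgj
    have heqf : Submodule.span ℝ ({u i₁, u j} : Set (Euc 3)) = LinearMap.ker f :=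
      Submodule.eq_of_le_of_finrank_le hsubf (by rw [hspan2, hdimF])
    have heqg : Submodule.span ℝ ({u i₁, u j} : Set (Euc 3)) = LinearMap.ker g :=
      Submodule.eq_of_le_of_finrank_le hsubg (by rw [hspan2, hdimF'])
    have hkfg : LinearMap.ker f = LinearMap.ker g := heqf ▸ heqg
    have hfne : f ≠ 0 := by
      intro h
      rw [h, LinearMap.ker_zero, finrank_top, finrank_euclideanSpace_fin] at hdimF
      omega
    have hgne : g ≠ 0 := by
      intro h
      rw [h, LinearMap.ker_zero, finrank_top, finrank_euclideanSpace_fin] at hdimF'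
      omega
    obtain ⟨lam, hlam⟩ := prop_of_ker_eq hkfg hfne
    have hlamne : lam ≠ 0 := by
      intro h
      apply hgne
      ext v
      rw [hlam v, h, zero_mul]
      rfl
    rcases lt_or_gt_of_ne hlamne with hl | hl
    · -- lam < 0 : F' is the opposite facet
      apply hnopp
      rw [hF'desc, hFZ]
      ext p
      constructor
      · rintro ⟨x', hx', h1', h0', rfl⟩
        refine ⟨∑ i, (1 - x' i) • u i,
          ⟨fun i => 1 - x' i,
            fun i => by
              obtain ⟨ha1, ha2⟩ := hx' i
              simp only [Set.mem_Icc]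
              constructor <;> linarith,
            fun i hi => ?_, rfl⟩, ?_⟩
        · have hfi : f (u i) < 0 := lt_of_le_of_ne (hneg i) (by simpa using hi)
          have hgi : 0 < g (u i) := by
            rw [hlam]
            exact mul_pos_of_neg_of_neg hl hfi
          show (1:ℝ) - x' i = 0
          rw [h1' i hgi]
          ring
        · show (∑ i, u i) - ∑ i, (1 - x' i) • u i = ∑ i, x' i • u i
          have hterm : ∀ i ∈ Finset.univ, u i - (1 - x' i) • u i = x' i • u i := by
            intro i _
            rw [sub_smul, one_smul]
            abel
          rw [← Finset.sum_sub_distrib, Finset.sum_congr rfl hterm]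
      · rintro ⟨q, ⟨y', hy', hy'0, rfl⟩, rfl⟩
        refine ⟨fun i => 1 - y' i,
          fun i => by
            obtain ⟨ha1, ha2⟩ := hy' i
            simp only [Set.mem_Icc]
            constructor <;> linarith,
          fun i hi => ?_, fun i hi => ?_, ?_⟩
        · have hfi : f (u i) < 0 := by
            rw [hlam] at hi
            nlinarith [hneg i]
          show (1:ℝ) - y' i = 1
          rw [hy'0 i (by simp [hfi.ne])]
          ring
        · exfalso
          have h6 : 0 ≤ g (u i) := by
            rw [hlam]
            have := mul_nonneg (neg_nonneg.2 hl.le) (neg_nonneg.2 (hneg i))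
            nlinarith
          linarith
        · show (∑ i, u i) - ∑ i, y' i • u i = ∑ i, (1 - y' i) • u i
          have hterm : ∀ i ∈ Finset.univ, u i - y' i • u i = (1 - y' i) • u i := by
            intro i _
            rw [sub_smul, one_smul]
          rw [← Finset.sum_sub_distrib, Finset.sum_congr rfl hterm]
    · -- lam > 0 : F' = F
      apply hneF
      rw [hF'desc, hFdesc]
      have hiff : ∀ i, (0 < g (u i) ↔ 0 < f (u i)) ∧ (g (u i) < 0 ↔ f (u i) < 0) := by
        intro i
        rw [hlam]
        constructor
        · constructor <;> intro h <;> nlinarith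
        · constructor <;> intro h <;> nlinarith
      ext p
      constructor
      · rintro ⟨x', hx', h1', h0', rfl⟩
        exact ⟨x', hx', fun i hi => h1' i ((hiff i).1.2 hi),
          fun i hi => h0' i ((hiff i).2.2 hi), rfl⟩
      · rintro ⟨x', hx', h1', h0', rfl⟩
        exact ⟨x', hx', fun i hi => h1' i ((hiff i).1.1 hi),
          fun i hi => h0' i ((hiff i).2.1 hi), rfl⟩
  -- final containment
  intro p hp
  rw [Set.mem_add] at hp
  obtain ⟨q, hq, r, hr, rfl⟩ := hp
  rw [hFZ] at hq
  obtain ⟨x, hx, hx0, rfl⟩ := hq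
  obtain ⟨y, hy, hy0, rfl⟩ := hr
  have hkey : ∀ i, x i = 0 ∨ y i = 0 := by
    intro i
    by_cases hyi : y i = 0
    · exact Or.inr hyi
    · left
      have hiG : i ∈ genIndices u (zonotope u) F' \ {i₁} := by
        by_contra h
        exact hyi (hy0 i h)
      have hgi : g (u i) = 0 := genIndices_subset u (zonotope u) F' g hkg i hiG.1
      have hii1 : i ≠ i₁ := by simpa using hiG.2
      by_contra hxi
      have hfi : f (u i) = 0 := by
        by_contra h
        exact hxi (hx0 i h)
      exact hii1 (hcrux i hfi hgi)
  refine ⟨fun i => x i + y i, fun i => ?_, ?_⟩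
  · show x i + y i ∈ Set.Icc (0:ℝ) 1
    rcases hkey i with h | h
    · rw [h, zero_add]
      exact hy i
    · rw [h, add_zero]
      exact hx i
  · rw [← Finset.sum_add_distrib]
    exact Finset.sum_congr rfl (fun i _ => (add_smul (x i) (y i) (u i)).symm)


end MainThm
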